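/- arXiv:1508.00632 — 3 statements merged into one kernel-verified Lean document; each statement's English description precedes it below -/
import Mathlib

section
/- If Z ~ N(−v²/2, v²) for some v ≥ 0, then for any ω, s ∈ ℂ with u = u±(ω,s), we have E[exp(iωZ + isv²)] = E[exp(iuZ)]. -/
open MeasureTheory ProbabilityTheory Real Complex

lemma cpow_half_sq (z : ℂ) : (z ^ ((1:ℂ)/2)) ^ 2 = z := by
  by_cases h : z = 0
  · simp [h, Complex.zero_cpow (by norm_num : (1:ℂ)/2 ≠ 0)]
  · rw [sq, ← Complex.cpow_add _ _ h]
    norm_num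

lemma gauss_cexp_int (μ : ℝ) (V : NNReal) (a : ℂ) :
    ∫ z, Complex.exp (a * (z : ℂ)) ∂(gaussianReal μ V)
      = Complex.exp (a * μ + a ^ 2 * V / 2) := by
  by_cases hV : V = 0
  · simp [hV, gaussianReal_zero_var, integral_dirac]
  · rw [gaussianReal_of_var_ne_zero μ hV]
    have hpdf : (gaussianPDF μ V) = fun x => ((gaussianPDFReal μ V x).toNNReal : ENNReal) := by
      funext x; rw [gaussianPDF_def]; rfl
    rw [hpdf, integral_withDensity_eq_integral_smul
      ((measurable_gaussianPDFReal μ V).real_toNNReal) _]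
    have hV' : (0:ℝ) < (V : ℝ) := lt_of_le_of_ne V.2 (by exact_mod_cast (Ne.symm hV))
    have hVne : ((V:ℝ):ℂ) ≠ 0 := by exact_mod_cast hV'.ne'
    have key : ∀ x : ℝ, (gaussianPDFReal μ V x).toNNReal • Complex.exp (a * x)
        = (((Real.sqrt (2 * π * V))⁻¹ : ℝ) : ℂ) *
          Complex.exp (-(1/(2*(V:ℂ))) * (x:ℂ)^2 + ((μ:ℂ)/V + a) * x + (-(μ:ℂ)^2/(2*V))) := by
      intro x
      rw [NNReal.smul_def, Real.coe_toNNReal _ (gaussianPDFReal_nonneg μ V x),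
        Complex.real_smul, gaussianPDFReal]
      push_cast
      rw [mul_assoc]
      congr 1
      rw [← Complex.exp_add]
      congr 1
      field_simp
      ring
    simp_rw [key]
    rw [integral_const_mul, integral_cexp_quadratic (b := -(1/(2*(V:ℂ))))
      (by simp [hV']) _ _]
    have hpos : (0:ℝ) ≤ 2 * π * V := by positivity
    have hs : ((Real.sqrt (2*π*(V:ℝ)) : ℝ) : ℂ) = ((2*π*(V:ℝ):ℝ):ℂ) ^ ((1:ℂ)/2) := by
      rw [Real.sqrt_eq_rpow, Complex.ofReal_cpow hpos]
      norm_num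
    have h1 : (↑π / - -(1/(2*(V:ℂ)))) ^ ((1:ℂ) / 2) = ((2 * π * V : ℝ) : ℂ) ^ ((1:ℂ)/2) := by
      congr 1
      push_cast
      field_simp
    have hb : ((2*π*(V:ℝ):ℝ):ℂ) ≠ 0 := by
      exact_mod_cast (by positivity : (2*π*(V:ℝ)) ≠ 0)
    rw [h1, Complex.ofReal_inv, hs, ← mul_assoc,
      inv_mul_cancel₀ (by simp [Complex.cpow_eq_zero_iff, Real.pi_ne_zero]; exact_mod_cast hV'.ne'), one_mul]
    congr 1
    field_simp
    ring
/-- If `Z ~ N(−v²/2, v²)` for some `v ≥ 0`, then for any `ω, s ∈ ℂ` and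
`u = u±(ω,s) = i(−1/2 ± √(1/4 − ω² − iω + 2is))`, one has
`E[exp(iωZ + isv²)] = E[exp(iuZ)]`. -/
theorem stmt_2 (v : ℝ) (hv : 0 ≤ v) (ω s u : ℂ)
    (hu : u = Complex.I * (-(1 / 2) +
            (1 / 4 - ω ^ 2 - Complex.I * ω + 2 * Complex.I * s) ^ ((1 : ℂ) / 2)) ∨
          u = Complex.I * (-(1 / 2) -
            (1 / 4 - ω ^ 2 - Complex.I * ω + 2 * Complex.I * s) ^ ((1 : ℂ) / 2))) :
    ∫ z, Complex.exp (Complex.I * ω * (z : ℂ) + Complex.I * s * (v : ℂ) ^ 2)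
        ∂(gaussianReal (-v ^ 2 / 2) (Real.toNNReal (v ^ 2)))
      = ∫ z, Complex.exp (Complex.I * u * (z : ℂ))
        ∂(gaussianReal (-v ^ 2 / 2) (Real.toNNReal (v ^ 2))) := by
  have hrel : u ^ 2 + Complex.I * u = ω ^ 2 + Complex.I * ω - 2 * Complex.I * s := by
    have h := cpow_half_sq (1 / 4 - ω ^ 2 - Complex.I * ω + 2 * Complex.I * s)
    set r := (1 / 4 - ω ^ 2 - Complex.I * ω + 2 * Complex.I * s) ^ ((1 : ℂ) / 2) with hr
    rcases hu with hu | hu <;> rw [hu]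
    · linear_combination ((-(1/2) + r) ^ 2 + (-(1/2) + r)) * Complex.I_sq - h
    · linear_combination ((-(1/2) - r) ^ 2 + (-(1/2) - r)) * Complex.I_sq - h
  have hVc : (((Real.toNNReal (v ^ 2)) : ℝ) : ℂ) = (v : ℂ) ^ 2 := by
    rw [Real.coe_toNNReal _ (sq_nonneg v)]; push_cast; ring
  simp_rw [Complex.exp_add, integral_mul_const]
  rw [gauss_cexp_int, gauss_cexp_int, ← Complex.exp_add]
  congr 1
  push_cast [Real.coe_toNNReal _ (sq_nonneg v)]
  linear_combination ((v:ℂ)^2/2) * hrel + ((ω^2 - u^2) * (v:ℂ)^2/2) * Complex.I_sq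
end

section
/- Let f : ℝ₊ → ℝ be twice continuously differentiable. Then for every s, κ > 0, f(s) = f(κ) + f'(κ)((s−κ)⁺ − (κ−s)⁺) + ∫₀^κ f''(K)(K−s)⁺ dK + ∫_κ^∞ f''(K)(s−K)⁺ dK. -/
/-!
Taylor's formula with integral remainder gives
`f s = f κ + f' κ (s - κ) + ∫_κ^s f''(K) (s - K) dK`. Writing `s - K = (s - K)⁺ - (K - s)⁺`,
the put part of the remainder extends from `[κ, s]` to `(κ, ∞)` and the call part from `[s, κ]`
to `[0, κ]`, since each payoff vanishes on the added range (for the calls because `0 ≤ s`).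
-/

open MeasureTheory Set

lemma max_sub_zero_sub_max_sub_zero (a b : ℝ) : max (a - b) 0 - max (b - a) 0 = a - b := by
  rcases le_total a b with h | h <;> simp [h]

section VanishingIntegrand

variable {E : Type*} [NormedAddCommGroup E] [NormedSpace ℝ E] {g : ℝ → E} {a b c : ℝ}

lemma intervalIntegral_eq_of_eqOn_zero (hg : EqOn g 0 (uIcc a b))
    (hbc : IntervalIntegrable g volume b c) : ∫ x in a..c, g x = ∫ x in b..c, g x := by
  have hab : IntervalIntegrable g volume a b :=
    (continuousOn_const.congr hg).intervalIntegrable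
  rw [← intervalIntegral.integral_add_adjacent_intervals hab hbc,
    intervalIntegral.integral_congr hg]
  simp

lemma setIntegral_Ioi_eq_intervalIntegral (hg : EqOn g 0 (Ioi b)) :
    ∫ x in Ioi a, g x = ∫ x in a..b, g x := by
  have hind : EqOn g ((Iic b).indicator g) (Ioi a) := fun x _ ↦ by
    by_cases hx : x ≤ b
    · simp [hx]
    · simp [hx, hg (not_le.mp hx)]
  rw [setIntegral_congr_fun measurableSet_Ioi hind, setIntegral_indicator measurableSet_Iic,
    Ioi_inter_Iic]
  rcases le_or_gt a b with hab | hba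
  · rw [intervalIntegral.integral_of_le hab]
  · rw [Ioc_eq_empty_of_le hba.le, setIntegral_empty, intervalIntegral.integral_symm,
      intervalIntegral.integral_of_le hba.le,
      setIntegral_congr_fun measurableSet_Ioc fun x hx ↦ hg hx.1]
    simp

end VanishingIntegrand

lemma integral_deriv_deriv_mul_sub {f : ℝ → ℝ} (hf : ContDiff ℝ 2 f) (a b : ℝ) :
    ∫ x in a..b, deriv (deriv f) x * (b - x) = f b - f a - deriv f a * (b - a) := by
  have hf' : ContDiff ℝ 1 (deriv f) := hf.iterate_deriv' 1 1
  have hasDeriv : ∀ x, HasDerivAt (fun x ↦ f x + deriv f x * (b - x))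
      (deriv (deriv f) x * (b - x)) x := fun x ↦ by
    have := ((hf.differentiable two_ne_zero x).hasDerivAt).add
      (((hf'.differentiable one_ne_zero x).hasDerivAt).mul ((hasDerivAt_id x).const_sub b))
    exact this.congr_deriv (by simp only [id]; ring)
  rw [intervalIntegral.integral_eq_sub_of_hasDerivAt (fun x _ ↦ hasDeriv x)
    ((hf'.continuous_deriv le_rfl).mul (continuous_const.sub continuous_id) |>.intervalIntegrable a b)]
  ring

theorem stmt_3_general (f : ℝ → ℝ) (hf : ContDiff ℝ 2 f) (s κ : ℝ) (hs : 0 < s) :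
    f s = f κ + deriv f κ * (max (s - κ) 0 - max (κ - s) 0)
      + (∫ K in (0 : ℝ)..κ, deriv (deriv f) K * max (K - s) 0)
      + ∫ K in Set.Ioi κ, deriv (deriv f) K * max (s - K) 0 := by
  have hcont : Continuous (deriv (deriv f)) := (hf.iterate_deriv' 1 1).continuous_deriv le_rfl
  have integrable (φ : ℝ → ℝ) (hφ : Continuous φ) (a b : ℝ) :
      IntervalIntegrable (fun K ↦ deriv (deriv f) K * φ K) volume a b :=
    (hcont.mul hφ).intervalIntegrable a b
  have calls : ∫ K in (0 : ℝ)..κ, deriv (deriv f) K * max (K - s) 0 =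
      ∫ K in s..κ, deriv (deriv f) K * max (K - s) 0 := by
    refine intervalIntegral_eq_of_eqOn_zero (fun K hK ↦ ?_) ?_
    · rw [uIcc_of_le hs.le] at hK
      simp [hK.2]
    · exact integrable _ (by fun_prop) _ _
  have puts : ∫ K in Ioi κ, deriv (deriv f) K * max (s - K) 0 =
      ∫ K in κ..s, deriv (deriv f) K * max (s - K) 0 :=
    setIntegral_Ioi_eq_intervalIntegral fun K (hK : s < K) ↦ by simp [hK.le]
  have split : ∫ K in κ..s, deriv (deriv f) K * (s - K) =
      (∫ K in κ..s, deriv (deriv f) K * max (s - K) 0) -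
        ∫ K in κ..s, deriv (deriv f) K * max (K - s) 0 := by
    rw [← intervalIntegral.integral_sub (integrable _ (by fun_prop) _ _)
      (integrable _ (by fun_prop) _ _)]
    simp only [← mul_sub, max_sub_zero_sub_max_sub_zero]
  rw [calls, puts, max_sub_zero_sub_max_sub_zero, intervalIntegral.integral_symm κ s]
  linarith [integral_deriv_deriv_mul_sub hf κ s]

/-- Carr–Madan spanning identity: a twice continuously differentiable payoff `f` on `ℝ₊`
is spanned by a bond, a forward and a continuum of calls and puts. -/
theorem stmt_3 (f : ℝ → ℝ) (hf : ContDiff ℝ 2 f) (s κ : ℝ) (hs : 0 < s) (hκ : 0 < κ) :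
    f s = f κ + deriv f κ * (max (s - κ) 0 - max (κ - s) 0)
      + (∫ K in (0 : ℝ)..κ, deriv (deriv f) K * max (K - s) 0)
      + ∫ K in Set.Ioi κ, deriv (deriv f) K * max (s - K) 0 :=
  stmt_3_general f hf s κ hs
end

section
/- For n > 0 and ω ∈ ℂ with −2n < Im(ω) < 0, the generalized Fourier transform (1/2π)∫_ℝ Hₙ(x) e^{−iωx} dx of Hₙ(x) = (1 + tanh(nx))/2 equals Ĥₙ(ω) = (−i/(4n)) csch(πω/(2n)). -/
/-!
With `t = exp (2 n x)` and `s = 1 - i ω / (2 n)`, so that `0 < Re s < 1`, the transform becomes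
`(1 / 2n) ∫₀^∞ t^(s-1) / (1 + t) dt`. The substitution `x = t / (1 + t)` identifies this integral
with `B(s, 1 - s) = Γ(s) Γ(1 - s) = π / sin (π s)`, and `sin (π s) = i sinh (π ω / 2n)`.
-/

open MeasureTheory Set
open scoped Real

lemma hasDerivAt_div_one_add {t : ℝ} (ht : 1 + t ≠ 0) :
    HasDerivAt (fun t : ℝ => t / (1 + t)) ((1 + t) ^ 2)⁻¹ t := by
  have h := (hasDerivAt_id' t).div ((hasDerivAt_id' t).const_add 1) ht
  rwa [one_mul, mul_one, add_sub_cancel_right, one_div] at h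

lemma image_div_one_add_Ioi : (fun t : ℝ => t / (1 + t)) '' Ioi 0 = Ioo 0 1 := by
  ext y
  constructor
  · rintro ⟨t, ht : 0 < t, rfl⟩
    exact ⟨by positivity, (div_lt_one (by positivity)).2 (by linarith)⟩
  · rintro ⟨hy0, hy1⟩
    refine ⟨y / (1 - y), div_pos hy0 (by linarith), ?_⟩
    have : 1 - y ≠ 0 := by linarith
    field_simp
    ring

lemma injOn_div_one_add : InjOn (fun t : ℝ => t / (1 + t)) (Ioi 0) := by
  intro s (hs : 0 < s) t (ht : 0 < t) h
  have : 1 + s ≠ 0 := by positivity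
  have : 1 + t ≠ 0 := by positivity
  field_simp at h
  linarith

lemma Real.one_add_tanh_div_two (x : ℝ) :
    (1 + Real.tanh x) / 2 = Real.exp (2 * x) / (1 + Real.exp (2 * x)) := by
  have hx : Real.exp (2 * x) = Real.exp x ^ 2 := by rw [← Real.exp_nat_mul]; norm_num
  rw [Real.tanh_eq, Real.exp_neg, hx]
  have := Real.exp_pos x
  field_simp
  ring

theorem integral_comp_exp {E : Type*} [NormedAddCommGroup E] [NormedSpace ℝ E] (g : ℝ → E) :
    ∫ x, Real.exp x • g (Real.exp x) = ∫ y in Ioi 0, g y := by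
  rw [← Real.range_exp, ← image_univ, integral_image_eq_integral_abs_deriv_smul MeasurableSet.univ
    (fun x _ => (Real.hasDerivAt_exp x).hasDerivWithinAt) Real.exp_injective.injOn, setIntegral_univ]
  simp_rw [abs_of_pos (Real.exp_pos _)]

namespace Complex

theorem betaIntegral_eq_integral_Ioi (u v : ℂ) :
    betaIntegral u v = ∫ t in Ioi (0 : ℝ), (t : ℂ) ^ (u - 1) * (1 + (t : ℂ)) ^ (-(u + v)) := by
  rw [betaIntegral, intervalIntegral.integral_of_le zero_le_one, integral_Ioc_eq_integral_Ioo,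
    ← image_div_one_add_Ioi, integral_image_eq_integral_abs_deriv_smul measurableSet_Ioi
      (fun t (ht : 0 < t) => (hasDerivAt_div_one_add (by positivity)).hasDerivWithinAt)
      injOn_div_one_add]
  refine setIntegral_congr_fun measurableSet_Ioi fun t (ht : 0 < t) => ?_
  have hp : (0 : ℝ) < 1 + t := by linarith
  have hP : (1 + (t : ℂ)) ≠ 0 := by exact_mod_cast hp.ne'
  have harg : (1 + (t : ℂ)).arg ≠ π := by
    rw [← ofReal_one, ← ofReal_add, arg_ofReal_of_nonneg hp.le]
    exact Real.pi_ne_zero.symm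
  have hx : ((t / (1 + t) : ℝ) : ℂ) ^ (u - 1) = t ^ (u - 1) * (1 + (t : ℂ)) ^ (1 - u) := by
    rw [div_eq_mul_inv, ofReal_mul, mul_cpow_ofReal_nonneg ht.le (by positivity), ofReal_inv,
      inv_cpow _ _ (by exact_mod_cast harg), ← cpow_neg, neg_sub]
    push_cast; rfl
  have h1x : (1 - ((t / (1 + t) : ℝ) : ℂ)) ^ (v - 1) = (1 + (t : ℂ)) ^ (1 - v) := by
    rw [show 1 - ((t / (1 + t) : ℝ) : ℂ) = (1 + (t : ℂ))⁻¹ by push_cast; field_simp; ring,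
      inv_cpow _ _ harg, ← cpow_neg, neg_sub]
  have hjac : ((((1 + t) ^ 2)⁻¹ : ℝ) : ℂ) = (1 + (t : ℂ)) ^ (-2 : ℂ) := by
    rw [cpow_neg, cpow_ofNat]; push_cast; rfl
  rw [abs_of_pos (by positivity), real_smul, hx, h1x, hjac, mul_comm,
    mul_assoc, mul_assoc, ← cpow_add _ _ hP, ← cpow_add _ _ hP]
  ring_nf

theorem integral_cpow_div_one_add_Ioi {s : ℂ} (hs0 : 0 < s.re) (hs1 : s.re < 1) :
    ∫ t in Ioi (0 : ℝ), (t : ℂ) ^ (s - 1) / (1 + t) = π / sin (π * s) := by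
  have hbeta := betaIntegral_eq_Gamma_mul_div s (1 - s) hs0 (by simpa using hs1)
  rw [add_sub_cancel, Gamma_one, div_one, Gamma_mul_Gamma_one_sub,
    betaIntegral_eq_integral_Ioi, add_sub_cancel] at hbeta
  simpa only [div_eq_mul_inv, cpow_neg, cpow_one] using hbeta

theorem integral_exp_mul_div_one_add_exp {s : ℂ} (hs0 : 0 < s.re) (hs1 : s.re < 1) :
    ∫ x : ℝ, exp (s * x) / (1 + Real.exp x) = π / sin (π * s) := by
  rw [← integral_cpow_div_one_add_Ioi hs0 hs1, ← integral_comp_exp]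
  congr 1 with x
  rw [real_smul, cpow_def_of_ne_zero (by exact_mod_cast (Real.exp_pos x).ne'),
    ← ofReal_log (Real.exp_pos x).le, Real.log_exp, ofReal_exp, mul_div_assoc', ← exp_add]
  ring_nf

end Complex

open Complex

/-- For `n > 0` and `ω ∈ ℂ` with `−2n < Im ω < 0`, the generalized Fourier transform of
`Hₙ(x) = (1 + tanh(nx))/2` equals `(−i/(4n)) csch(πω/(2n))`. -/
theorem stmt_7 (n : ℝ) (hn : 0 < n) (ω : ℂ) (h1 : -2 * n < ω.im) (h2 : ω.im < 0) :
    (1 / (2 * (Real.pi : ℂ))) *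
        ∫ x : ℝ, (((1 + Real.tanh (n * x)) / 2 : ℝ) : ℂ) * Complex.exp (-(Complex.I * ω * (x : ℂ)))
      = (-Complex.I / (4 * (n : ℂ))) * (Complex.sinh ((Real.pi : ℂ) * ω / (2 * (n : ℂ))))⁻¹ := by
  have hn2 : 0 < 2 * n := by linarith
  have hnc : (n : ℂ) ≠ 0 := by exact_mod_cast hn.ne'
  set s : ℂ := 1 - I * ω / (2 * n)
  have hs : s.re = 1 + ω.im / (2 * n) := by
    rw [show s = 1 - I * ω / ((2 * n : ℝ) : ℂ) by push_cast; rfl]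
    simp only [sub_re, one_re, div_ofReal_re, mul_re, I_re, I_im]
    ring
  have hs0 : 0 < s.re := by
    have := (lt_div_iff₀ hn2).2 (by linarith : -1 * (2 * n) < ω.im)
    linarith
  have hs1 : s.re < 1 := by
    have := div_neg_of_neg_of_pos h2 hn2
    linarith
  have hintegrand : ∀ x : ℝ,
      (((1 + Real.tanh (n * x)) / 2 : ℝ) : ℂ) * exp (-(I * ω * x)) =
        exp (s * ↑(2 * n * x)) / (1 + Real.exp (2 * n * x)) := by
    intro x
    rw [Real.one_add_tanh_div_two, ← mul_assoc, ofReal_div, ofReal_add, ofReal_one, ofReal_exp,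
      div_mul_eq_mul_div, ← exp_add]
    congr 2
    push_cast
    simp only [s]
    field_simp
    ring
  have hsin : sin (π * s) = sinh (π * ω / (2 * n)) * I := by
    rw [show (π : ℂ) * s = π - π * ω / (2 * n) * I by ring, sin_pi_sub, sin_mul_I]
  simp_rw [hintegrand]
  rw [Measure.integral_comp_mul_left (fun y : ℝ => exp (s * y) / (1 + Real.exp y)),
    integral_exp_mul_div_one_add_exp hs0 hs1, hsin, abs_of_pos (inv_pos.2 hn2), real_smul]
  push_cast
  field_simp
  rw [I_sq]
  ring
end
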